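/- Let n ≥ 2 and let f : ℂ → SL_n(ℂ) be a morphism with π₁(f(t)) = (1,0,...,0,t)ᵀ. Then the map ψ : SL_n(ℂ) → SL_n(ℂ), ψ(X) = X · f(x_{n1})⁻¹ · E_{n1}(x_{n1}) (where x_{n1} is the (n,1)-entry of X), is well-defined as a regular map, is an automorphism with inverse X ↦ X · E_{n1}(−x_{n1}) · f(x_{n1}), and satisfies ψ(f(t)) = E_{n1}(t) for all t ∈ ℂ. -/

import Mathlib

/-!
Write `x X` for the `(n, 1)`-entry of `X` and `E s` for the transvection `E_{n1}(s)`. Since `f s`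
and `E s` have the same first column, `g s := (f s)⁻¹ * E s` fixes the first column, so `x` is
invariant under right multiplication by any `g s`. For such an invariant, `X ↦ X * g (x X)` and
`X ↦ X * (g (x X))⁻¹` are mutually inverse; these are `ψ` and `χ`. Both are regular because
`(f s)⁻¹ = adj (f s)` and `E (± s)` have entries polynomial in `s`.
-/

open Matrix

noncomputable section

abbrev SL (n : ℕ) := Matrix.SpecialLinearGroup (Fin n) ℂ

/-- A self-map of `SL n ℂ` is regular (algebraic) if each matrix entry of the image is
given by a polynomial in the matrix entries of the argument. -/
def SLRegular {n : ℕ} (φ : SL n → SL n) : Prop :=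
  ∀ i j : Fin n, ∃ P : MvPolynomial (Fin n × Fin n) ℂ,
    ∀ X : SL n, (φ X : Matrix (Fin n) (Fin n) ℂ) i j =
      MvPolynomial.eval (fun kl => (X : Matrix (Fin n) (Fin n) ℂ) kl.1 kl.2) P

/-- An algebraic automorphism of `SL n ℂ`: a regular map with a regular inverse. -/
def SLAlgAut {n : ℕ} (φ : SL n → SL n) : Prop :=
  SLRegular φ ∧ ∃ ψ : SL n → SL n, SLRegular ψ ∧
    Function.LeftInverse ψ φ ∧ Function.RightInverse ψ φ

section RightMulVia

variable {G α : Type*} [Group G]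

def rightMulVia (x : G → α) (g : α → G) (X : G) : G := X * g (x X)

variable {x : G → α} {g : α → G}

theorem apply_mul_inv_eq_of_apply_mul_eq (hx : ∀ X a, x (X * g a) = x X) (X : G) (a : α) :
    x (X * (g a)⁻¹) = x X := by
  simpa using (hx (X * (g a)⁻¹) a).symm

theorem leftInverse_rightMulVia_inv (hx : ∀ X a, x (X * g a) = x X) :
    Function.LeftInverse (rightMulVia x fun a => (g a)⁻¹) (rightMulVia x g) := fun X => by
  simp [rightMulVia, hx]

theorem rightInverse_rightMulVia_inv (hx : ∀ X a, x (X * g a) = x X) :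
    Function.RightInverse (rightMulVia x fun a => (g a)⁻¹) (rightMulVia x g) := fun X => by
  simp [rightMulVia, apply_mul_inv_eq_of_apply_mul_eq hx]

end RightMulVia

section PolynomialFamily

variable {m R : Type*} [Fintype m] [DecidableEq m] [CommRing R]

def Matrix.IsPolynomialFamily (M : R → Matrix m m R) : Prop :=
  ∃ Q : Matrix m m (Polynomial R), ∀ s, M s = (Polynomial.evalRingHom s).mapMatrix Q

namespace Matrix.IsPolynomialFamily

variable {M N : R → Matrix m m R}

theorem of_apply_eq_eval (P : m → m → Polynomial R)
    (hP : ∀ s i j, M s i j = (P i j).eval s) : IsPolynomialFamily M :=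
  ⟨of P, fun s => by ext i j; simp [hP]⟩

theorem mul (hM : IsPolynomialFamily M) (hN : IsPolynomialFamily N) :
    IsPolynomialFamily fun s => M s * N s := by
  obtain ⟨P, hP⟩ := hM
  obtain ⟨Q, hQ⟩ := hN
  exact ⟨P * Q, fun s => by simp only [hP, hQ, map_mul]⟩

theorem adjugate (hM : IsPolynomialFamily M) : IsPolynomialFamily fun s => (M s).adjugate := by
  obtain ⟨P, hP⟩ := hM
  exact ⟨P.adjugate, fun s => by simp only [hP, RingHom.map_adjugate]⟩

theorem transvection (i j : m) (q : Polynomial R) :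
    IsPolynomialFamily fun s => Matrix.transvection i j (q.eval s) := by
  refine ⟨Matrix.transvection i j q, fun s => ?_⟩
  ext k l
  simp only [Matrix.transvection, RingHom.mapMatrix_apply, map_apply, add_apply, one_apply,
    single_apply]
  split_ifs <;> simp

end Matrix.IsPolynomialFamily

end PolynomialFamily

theorem slRegular_of_coe_eq_mul {n : ℕ} {M : ℂ → Matrix (Fin n) (Fin n) ℂ}
    (hM : Matrix.IsPolynomialFamily M) (i j : Fin n) {φ : SL n → SL n}
    (hφ : ∀ X, (φ X : Matrix (Fin n) (Fin n) ℂ) = X * M (X i j)) : SLRegular φ := by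
  obtain ⟨Q, hQ⟩ := hM
  intro a b
  refine ⟨∑ k, MvPolynomial.X (a, k) * Polynomial.aeval (MvPolynomial.X (i, j)) (Q k b),
    fun X => ?_⟩
  simp only [hφ, hQ, mul_apply, map_sum, map_mul, MvPolynomial.eval_X]
  refine Finset.sum_congr rfl fun k _ => ?_
  rw [← MvPolynomial.aeval_eq_eval, ← Polynomial.aeval_algHom_apply, MvPolynomial.aeval_X,
    Polynomial.coe_aeval_eq_eval]
  rfl

namespace Matrix.SpecialLinearGroup

variable {ι R : Type*} [Fintype ι] [DecidableEq ι] [CommRing R]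

theorem mul_inv_mul_apply_of_col_eq {A B C : SpecialLinearGroup ι R} {j : ι}
    (h : ∀ k, (B : Matrix ι ι R) k j = C k j) (i : ι) :
    ((A * B⁻¹ * C : SpecialLinearGroup ι R) : Matrix ι ι R) i j = (A : Matrix ι ι R) i j := by
  have hcol : ∀ M : Matrix ι ι R, (M * C) i j = (M * B) i j := fun M => by simp [mul_apply, h]
  rw [coe_mul, hcol, ← coe_mul, inv_mul_cancel_right]

theorem transvection_apply_col {i j : ι} (hij : i ≠ j) (b : R) (k : ι) :
    (transvection hij b : Matrix ι ι R) k j = if k = i then b else if k = j then 1 else 0 := by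
  rcases eq_or_ne k i with rfl | hki
  · simp [transvection_coe, hij]
  · simp [transvection_coe, hki, one_apply, Ne.symm hki]

end Matrix.SpecialLinearGroup

theorem stmt_9 (n : ℕ) (hn : 2 ≤ n) (f : ℂ → SL n)
    (P : Fin n → Fin n → Polynomial ℂ)
    (hP : ∀ (t : ℂ) (i j : Fin n), (f t : Matrix (Fin n) (Fin n) ℂ) i j = (P i j).eval t)
    (hcol1 : ∀ t : ℂ, (f t : Matrix (Fin n) (Fin n) ℂ) ⟨0, by omega⟩ ⟨0, by omega⟩ = 1)
    (hcoln : ∀ t : ℂ, (f t : Matrix (Fin n) (Fin n) ℂ) ⟨n - 1, by omega⟩ ⟨0, by omega⟩ = t)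
    (hcol0 : ∀ (t : ℂ) (i : Fin n), (i : ℕ) ≠ 0 → (i : ℕ) ≠ n - 1 →
      (f t : Matrix (Fin n) (Fin n) ℂ) i ⟨0, by omega⟩ = 0) :
    ∃ ψ χ : SL n → SL n,
      (∀ X : SL n, (ψ X : Matrix (Fin n) (Fin n) ℂ) =
        (X : Matrix (Fin n) (Fin n) ℂ) *
          (((f ((X : Matrix (Fin n) (Fin n) ℂ) ⟨n - 1, by omega⟩ ⟨0, by omega⟩))⁻¹ :
              SL n) : Matrix (Fin n) (Fin n) ℂ) *
          ((1 : Matrix (Fin n) (Fin n) ℂ) +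
            Matrix.single ⟨n - 1, by omega⟩ ⟨0, by omega⟩
              ((X : Matrix (Fin n) (Fin n) ℂ) ⟨n - 1, by omega⟩ ⟨0, by omega⟩))) ∧
      (∀ X : SL n, (χ X : Matrix (Fin n) (Fin n) ℂ) =
        (X : Matrix (Fin n) (Fin n) ℂ) *
          ((1 : Matrix (Fin n) (Fin n) ℂ) +
            Matrix.single ⟨n - 1, by omega⟩ ⟨0, by omega⟩
              (-((X : Matrix (Fin n) (Fin n) ℂ) ⟨n - 1, by omega⟩ ⟨0, by omega⟩))) *
          ((f ((X : Matrix (Fin n) (Fin n) ℂ) ⟨n - 1, by omega⟩ ⟨0, by omega⟩)) :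
            Matrix (Fin n) (Fin n) ℂ)) ∧
      SLRegular ψ ∧ SLRegular χ ∧
      Function.LeftInverse χ ψ ∧ Function.RightInverse χ ψ ∧
      ∀ t : ℂ, (ψ (f t) : Matrix (Fin n) (Fin n) ℂ) =
        (1 : Matrix (Fin n) (Fin n) ℂ) +
          Matrix.single ⟨n - 1, by omega⟩ ⟨0, by omega⟩ t := by
  set i₀ : Fin n := ⟨n - 1, by omega⟩
  set j₀ : Fin n := ⟨0, by omega⟩
  have hij : i₀ ≠ j₀ := by simp [i₀, j₀, Fin.ext_iff]; omega
  let E : ℂ → SL n := SpecialLinearGroup.transvection hij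
  let x : SL n → ℂ := fun X => (X : Matrix (Fin n) (Fin n) ℂ) i₀ j₀
  let g : ℂ → SL n := fun s => (f s)⁻¹ * E s
  have hfE : ∀ s k,
      (f s : Matrix (Fin n) (Fin n) ℂ) k j₀ = (E s : Matrix (Fin n) (Fin n) ℂ) k j₀ := by
    intro s k
    rw [SpecialLinearGroup.transvection_apply_col]
    split_ifs with hk hk'
    · exact hk ▸ hcoln s
    · exact hk' ▸ hcol1 s
    · exact hcol0 s k (fun h => hk' (Fin.ext h)) (fun h => hk (Fin.ext h))
  have hx : ∀ X s, x (X * g s) = x X := fun X s => by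
    rw [← mul_assoc]
    exact SpecialLinearGroup.mul_inv_mul_apply_of_col_eq (hfE s) i₀
  have hf : Matrix.IsPolynomialFamily fun s => (f s : Matrix (Fin n) (Fin n) ℂ) :=
    .of_apply_eq_eval P hP
  refine ⟨rightMulVia x g, rightMulVia x fun s => (g s)⁻¹, fun X => ?_, fun X => ?_, ?_, ?_,
    leftInverse_rightMulVia_inv hx, rightInverse_rightMulVia_inv hx, fun t => ?_⟩
  · simp [rightMulVia, g, E, x, mul_assoc, SpecialLinearGroup.transvection_coe]
  · simp [rightMulVia, g, E, x, mul_assoc, SpecialLinearGroup.transvection_inv,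
      SpecialLinearGroup.transvection_coe]
  · refine slRegular_of_coe_eq_mul (hf.adjugate.mul (.transvection i₀ j₀ .X)) i₀ j₀ fun X => ?_
    simp [rightMulVia, g, E, x, SpecialLinearGroup.transvection_coe, Matrix.transvection]
  · refine slRegular_of_coe_eq_mul ((IsPolynomialFamily.transvection i₀ j₀ (-.X)).mul hf) i₀ j₀
      fun X => ?_
    simp [rightMulVia, g, E, x, SpecialLinearGroup.transvection_inv,
      SpecialLinearGroup.transvection_coe, Matrix.transvection]
  · have hxt : x (f t) = t := hcoln t
    simp [rightMulVia, hxt, g, E, SpecialLinearGroup.transvection_coe]
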